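/- Under the standing assumptions, for any Palais–Smale sequence {u_k} of J_λ at level c (i.e. J_λ(u_k) → c and J_λ'(u_k) → 0 in the dual of E_λ), one has lim_{k→∞} ‖u_k‖²_{E_λ} = (2p/(p−2)) c. Moreover there is a constant C₁ > 0 independent of λ such that either c = 0 or c > C₁. -/

import Mathlib

open Filter Topology

structure GraphData (V : Type*) where
  ω : V → V → ℝ
  μ : V → ℝ
  sym : ∀ x y, ω x y = ω y x
  nonneg : ∀ x y, 0 ≤ ω x y
  loopless : ∀ x, ω x x = 0
  locfin : ∀ x, {y | ω x y ≠ 0}.Finite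
  μpos : ∀ x, 0 < μ x

variable {V : Type*}

noncomputable def GraphData.lap (g : GraphData V) (u : V → ℝ) (x : V) : ℝ :=
  (1 / g.μ x) * ∑' y, g.ω x y * (u y - u x)

noncomputable def GraphData.grad (g : GraphData V) (u v : V → ℝ) (x : V) : ℝ :=
  (1 / (2 * g.μ x)) * ∑' y, g.ω x y * (u y - u x) * (v y - v x)

noncomputable def GraphData.integral (g : GraphData V) (f : V → ℝ) : ℝ :=
  ∑' x, g.μ x * f x

def GraphData.G (g : GraphData V) : SimpleGraph V where
  Adj x y := 0 < g.ω x y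
  symm := ⟨by intro x y h; show 0 < g.ω y x; rwa [g.sym y x]⟩
  loopless := ⟨by intro x h; simp [g.loopless x] at h⟩

noncomputable def GraphData.enormSq (g : GraphData V) (a : V → ℝ) (lam : ℝ) (u : V → ℝ) : ℝ :=
  ∑' x, g.μ x * ((g.lap u x) ^ 2 + g.grad u u x + (lam * a x + 1) * (u x) ^ 2)

def GraphData.memE (g : GraphData V) (a : V → ℝ) (lam : ℝ) (u : V → ℝ) : Prop :=
  Summable fun x => g.μ x * ((g.lap u x) ^ 2 + g.grad u u x + (lam * a x + 1) * (u x) ^ 2)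

noncomputable def GraphData.lpInt (g : GraphData V) (p : ℝ) (u : V → ℝ) : ℝ :=
  ∑' x, g.μ x * |u x| ^ p

noncomputable def GraphData.Jlam (g : GraphData V) (a : V → ℝ) (lam p : ℝ) (u : V → ℝ) : ℝ :=
  (1 / 2) * g.enormSq a lam u - (1 / p) * g.lpInt p u

def GraphData.Nehari (g : GraphData V) (a : V → ℝ) (lam p : ℝ) : Set (V → ℝ) :=
  {u | u ≠ 0 ∧ g.memE a lam u ∧ g.enormSq a lam u = g.lpInt p u}

noncomputable def GraphData.Jderiv (g : GraphData V) (a : V → ℝ) (lam p : ℝ) (u φ : V → ℝ) : ℝ :=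
  (∑' x, g.μ x * (g.lap u x * g.lap φ x + g.grad u φ x + (lam * a x + 1) * u x * φ x))
    - ∑' x, g.μ x * (|u x| ^ (p - 2) * u x * φ x)

def GraphData.bdry (g : GraphData V) (Ω : Set V) : Set V :=
  {y | y ∉ Ω ∧ ∃ x ∈ Ω, 0 < g.ω x y}

noncomputable def GraphData.hnormSq (g : GraphData V) (Ω : Set V) (u : V → ℝ) : ℝ :=
  (∑' x : ↥(Ω ∪ g.bdry Ω), g.μ x * ((g.lap u x) ^ 2 + g.grad u u x))
    + ∑' x : Ω, g.μ x * (u x) ^ 2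

noncomputable def GraphData.lpIntO (g : GraphData V) (Ω : Set V) (p : ℝ) (u : V → ℝ) : ℝ :=
  ∑' x : Ω, g.μ x * |u x| ^ p

noncomputable def GraphData.JOmega (g : GraphData V) (Ω : Set V) (p : ℝ) (u : V → ℝ) : ℝ :=
  (1 / 2) * g.hnormSq Ω u - (1 / p) * g.lpIntO Ω p u

def GraphData.memH (g : GraphData V) (Ω : Set V) (u : V → ℝ) : Prop :=
  ∀ x ∉ Ω, u x = 0

def GraphData.NehariO (g : GraphData V) (Ω : Set V) (p : ℝ) : Set (V → ℝ) :=
  {u | u ≠ 0 ∧ g.memH Ω u ∧ g.hnormSq Ω u = g.lpIntO Ω p u}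

noncomputable def GraphData.JderivO (g : GraphData V) (Ω : Set V) (p : ℝ) (u φ : V → ℝ) : ℝ :=
  (∑' x : ↥(Ω ∪ g.bdry Ω), g.μ x * (g.lap u x * g.lap φ x + g.grad u φ x))
    + (∑' x : Ω, g.μ x * (u x * φ x))
    - ∑' x : Ω, g.μ x * (|u x| ^ (p - 2) * u x * φ x)

/-!
Testing the derivative against `u_k` itself gives `J_λ'(u_k)u_k = ‖u_k‖² - ∫|u_k|^p`, and
`J_λ(u_k) - J_λ'(u_k)u_k / p = (1/2 - 1/p)‖u_k‖²`. Since `|J_λ'(u_k)u_k| ≤ ε_k ‖u_k‖` with `ε_k → 0`,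
the norms stay bounded, hence `J_λ'(u_k)u_k → 0` and both `‖u_k‖²` and `∫|u_k|^p` tend to
`x = 2pc/(p-2) ≥ 0`. Passing to the limit in the Sobolev inequality `∫|u_k|^p ≤ η_p^p ‖u_k‖^p` gives
`x ≤ η_p^p x^{p/2}`, so either `x = 0` or `x ≥ η_p^{-2p/(p-2)}`.
-/

lemma abs_rpow_sub_two_mul_self_mul_self {p : ℝ} (hp : p ≠ 0) (t : ℝ) :
    |t| ^ (p - 2) * t * t = |t| ^ p := by
  rcases eq_or_ne t 0 with rfl | ht
  · simp [Real.zero_rpow hp]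
  · rw [mul_assoc, ← abs_mul_abs_self, ← sq, ← Real.rpow_natCast,
      ← Real.rpow_add (abs_pos.2 ht)]
    norm_num

namespace GraphData

variable (g : GraphData V)

lemma grad_self_nonneg (u : V → ℝ) (x : V) : 0 ≤ g.grad u u x := by
  have hμ := g.μpos x
  refine mul_nonneg (by positivity) (tsum_nonneg fun y => ?_)
  rw [mul_assoc]
  exact mul_nonneg (g.nonneg x y) (mul_self_nonneg _)

lemma enormSq_nonneg {a : V → ℝ} {lam : ℝ} (ha : ∀ x, 0 ≤ a x) (hlam : 0 ≤ lam)
    (u : V → ℝ) : 0 ≤ g.enormSq a lam u :=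
  tsum_nonneg fun x => by
    have hax := ha x
    exact mul_nonneg (g.μpos x).le <| add_nonneg
      (add_nonneg (sq_nonneg _) (g.grad_self_nonneg u x)) (by positivity)

lemma lpInt_nonneg (p : ℝ) (u : V → ℝ) : 0 ≤ g.lpInt p u :=
  tsum_nonneg fun x => mul_nonneg (g.μpos x).le (Real.rpow_nonneg (abs_nonneg _) _)

lemma Jderiv_self {p : ℝ} (hp : p ≠ 0) (a : V → ℝ) (lam : ℝ) (u : V → ℝ) :
    g.Jderiv a lam p u u = g.enormSq a lam u - g.lpInt p u := by
  unfold Jderiv enormSq lpInt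
  congr 1 <;> refine tsum_congr fun x => ?_
  · ring
  · rw [abs_rpow_sub_two_mul_self_mul_self hp]

end GraphData

lemma sqrt_le_max_of_le_add_mul_sqrt {x A B : ℝ} (hA : 0 ≤ A)
    (h : x ≤ A + B * √x) : √x ≤ max 1 (A + B) := by
  by_contra! hlt
  have h1 : 1 < √x := (le_max_left _ _).trans_lt hlt
  have hAB : A + B < √x := (le_max_right _ _).trans_lt hlt
  have hx : x = √x ^ 2 := (Real.sq_sqrt (Real.sqrt_pos.1 (one_pos.trans h1)).le).symm
  nlinarith

section PalaisSmale

variable {N I ε : ℕ → ℝ} {p c : ℝ}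

lemma eventually_sqrt_le_of_abs_sub_le_mul_sqrt (hp : 2 < p)
    (hJ : Tendsto (fun k => N k / 2 - I k / p) atTop (𝓝 c)) (hε : Tendsto ε atTop (𝓝 0))
    (hD : ∀ k, |N k - I k| ≤ ε k * √(N k)) : ∃ M, ∀ᶠ k in atTop, √(N k) ≤ M := by
  have hp2 : 0 < p - 2 := by linarith
  refine ⟨max 1 (2 * p / (p - 2) * (|c| + 1) + 2 / (p - 2)), ?_⟩
  filter_upwards [hJ.eventually (eventually_le_nhds ((le_abs_self c).trans_lt (lt_add_one _))),
    hε.eventually (eventually_le_nhds one_pos)] with k hJk hεk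
  refine sqrt_le_max_of_le_add_mul_sqrt (by positivity) ?_
  have hN : N k = 2 * p / (p - 2) * (N k / 2 - I k / p) - 2 / (p - 2) * (N k - I k) := by
    field_simp
    ring
  have hD' : -(N k - I k) ≤ √(N k) := by
    have := hD k
    nlinarith [neg_abs_le (N k - I k), Real.sqrt_nonneg (N k)]
  have hJ' := mul_le_mul_of_nonneg_left hJk (by positivity : 0 ≤ 2 * p / (p - 2))
  have hD'' := mul_le_mul_of_nonneg_left hD' (by positivity : 0 ≤ 2 / (p - 2))
  linarith

lemma tendsto_sub_of_abs_sub_le_mul_sqrt (hp : 2 < p)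
    (hJ : Tendsto (fun k => N k / 2 - I k / p) atTop (𝓝 c)) (hε : Tendsto ε atTop (𝓝 0))
    (hD : ∀ k, |N k - I k| ≤ ε k * √(N k)) : Tendsto (fun k => N k - I k) atTop (𝓝 0) := by
  obtain ⟨M, hM⟩ := eventually_sqrt_le_of_abs_sub_le_mul_sqrt hp hJ hε hD
  refine squeeze_zero_norm' ?_ (by simpa using hε.abs.mul_const M)
  filter_upwards [hM] with k hk
  calc ‖N k - I k‖ = |N k - I k| := Real.norm_eq_abs _
    _ ≤ ε k * √(N k) := hD k
    _ ≤ |ε k| * M := mul_le_mul (le_abs_self _) hk (Real.sqrt_nonneg _) (abs_nonneg _)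

lemma tendsto_of_abs_sub_le_mul_sqrt (hp : 2 < p)
    (hJ : Tendsto (fun k => N k / 2 - I k / p) atTop (𝓝 c)) (hε : Tendsto ε atTop (𝓝 0))
    (hD : ∀ k, |N k - I k| ≤ ε k * √(N k)) :
    Tendsto N atTop (𝓝 (2 * p / (p - 2) * c)) ∧ Tendsto I atTop (𝓝 (2 * p / (p - 2) * c)) := by
  have hp2 : p - 2 ≠ 0 := by linarith
  have hD0 := tendsto_sub_of_abs_sub_le_mul_sqrt hp hJ hε hD
  have hN : Tendsto N atTop (𝓝 (2 * p / (p - 2) * c)) := by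
    have := (hJ.const_mul (2 * p / (p - 2))).sub (hD0.const_mul (2 / (p - 2)))
    rw [mul_zero, sub_zero] at this
    refine this.congr fun k => ?_
    field_simp
    ring
  exact ⟨hN, by simpa using hN.sub hD0⟩

end PalaisSmale

lemma one_div_rpow_le_of_le_mul_rpow {x K q : ℝ} (hx : 0 < x) (hK : 0 < K) (hq : 1 < q)
    (h : x ≤ K * x ^ q) : (1 / K) ^ (1 / (q - 1)) ≤ x := by
  have hpow : 1 / K ≤ x ^ (q - 1) := by
    have hsplit : x ^ q = x ^ (q - 1) * x := by
      rw [← Real.rpow_add_one hx.ne', sub_add_cancel]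
    rw [div_le_iff₀ hK]
    refine le_of_mul_le_mul_left ?_ hx
    calc x * 1 ≤ K * x ^ q := by rwa [mul_one]
      _ = x * (x ^ (q - 1) * K) := by rw [hsplit]; ring
  calc (1 / K) ^ (1 / (q - 1)) ≤ (x ^ (q - 1)) ^ (q - 1)⁻¹ := by
        rw [one_div (q - 1)]
        exact Real.rpow_le_rpow (by positivity) hpow (by simp only [inv_nonneg]; linarith)
    _ = x := Real.rpow_rpow_inv hx.le (by linarith)

lemma rpow_le_of_rpow_one_div_le {I N η p : ℝ} (hI : 0 ≤ I) (hN : 0 ≤ N) (hη : 0 ≤ η)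
    (hp : 0 < p) (h : I ^ (1 / p) ≤ η * N ^ ((1 : ℝ) / 2)) : I ≤ η ^ p * N ^ (p / 2) := by
  have := Real.rpow_le_rpow (Real.rpow_nonneg hI _) h hp.le
  rwa [← Real.rpow_mul hI, one_div_mul_cancel hp.ne', Real.rpow_one,
    Real.mul_rpow hη (Real.rpow_nonneg hN _), ← Real.rpow_mul hN, one_div_mul_eq_div] at this

lemma eq_zero_or_lt_of_tendsto_of_le_rpow {N I : ℕ → ℝ} {p c η : ℝ} (hp : 2 < p) (hη : 0 < η)
    (hN0 : ∀ k, 0 ≤ N k) (hN : Tendsto N atTop (𝓝 (2 * p / (p - 2) * c)))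
    (hI : Tendsto I atTop (𝓝 (2 * p / (p - 2) * c))) (hIN : ∀ k, I k ≤ η ^ p * N k ^ (p / 2)) :
    c = 0 ∨ (p - 2) / (2 * p) * (1 / (2 * η ^ p)) ^ (2 / (p - 2)) < c := by
  have hp2 : 0 < p - 2 := by linarith
  have hηp : 0 < η ^ p := Real.rpow_pos_of_pos hη p
  set x := 2 * p / (p - 2) * c with hx_def
  have hlim : x ≤ η ^ p * x ^ (p / 2) :=
    le_of_tendsto_of_tendsto' hI ((hN.rpow_const (Or.inr (by positivity))).const_mul _) hIN
  rcases (ge_of_tendsto' hN hN0).eq_or_lt with hx | hx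
  · exact Or.inl ((mul_eq_zero.1 hx.symm).resolve_left (by positivity))
  right
  have hbound := one_div_rpow_le_of_le_mul_rpow hx hηp (by linarith) hlim
  rw [show 1 / (p / 2 - 1) = 2 / (p - 2) by field_simp] at hbound
  have hlt : (1 / (2 * η ^ p)) ^ (2 / (p - 2)) < (1 / η ^ p) ^ (2 / (p - 2)) :=
    Real.rpow_lt_rpow (by positivity) (one_div_lt_one_div_of_lt hηp (by linarith))
      (by positivity)
  calc (p - 2) / (2 * p) * (1 / (2 * η ^ p)) ^ (2 / (p - 2))
      < (p - 2) / (2 * p) * x := by gcongr; linarith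
    _ = c := by
      rw [hx_def]
      field_simp

theorem stmt11_general (g : GraphData V) (lam p ηp c : ℝ)
    (a : V → ℝ) (ha : ∀ x, 0 ≤ a x) (hlam : 1 < lam) (hp : 2 < p) (hηp : 0 < ηp)
    (hemb : ∀ v, g.memE a lam v →
      (g.lpInt p v) ^ (1 / p) ≤ ηp * (g.enormSq a lam v) ^ ((1 : ℝ) / 2))
    (u : ℕ → V → ℝ) (hmem : ∀ k, g.memE a lam (u k))
    (hJ : Filter.Tendsto (fun k => g.Jlam a lam p (u k)) Filter.atTop (nhds c))
    (hJ' : ∃ ε : ℕ → ℝ, Filter.Tendsto ε Filter.atTop (nhds 0) ∧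
      ∀ k, ∀ φ, g.memE a lam φ →
        |g.Jderiv a lam p (u k) φ| ≤ ε k * (g.enormSq a lam φ) ^ ((1 : ℝ) / 2)) :
    Filter.Tendsto (fun k => g.enormSq a lam (u k)) Filter.atTop
        (nhds ((2 * p / (p - 2)) * c))
    ∧ (c = 0 ∨ ((p - 2) / (2 * p)) * (1 / (2 * ηp ^ p)) ^ (2 / (p - 2)) < c) := by
  obtain ⟨ε, hε, hJ'ε⟩ := hJ'
  have hp0 : 0 < p := by linarith
  have hN : ∀ k, 0 ≤ g.enormSq a lam (u k) := fun k => g.enormSq_nonneg ha (by linarith) (u k)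
  have hD : ∀ k, |g.enormSq a lam (u k) - g.lpInt p (u k)| ≤ ε k * √(g.enormSq a lam (u k)) :=
    fun k => by
      simpa only [g.Jderiv_self hp0.ne', Real.sqrt_eq_rpow] using hJ'ε k (u k) (hmem k)
  have hJ : Tendsto (fun k => g.enormSq a lam (u k) / 2 - g.lpInt p (u k) / p) atTop (𝓝 c) :=
    hJ.congr fun k => by
      simp only [GraphData.Jlam]
      ring
  obtain ⟨hNlim, hIlim⟩ := tendsto_of_abs_sub_le_mul_sqrt hp hJ hε hD
  refine ⟨hNlim, eq_zero_or_lt_of_tendsto_of_le_rpow hp hηp hN hNlim hIlim fun k => ?_⟩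
  exact rpow_le_of_rpow_one_div_le (g.lpInt_nonneg p _) (hN k) hηp.le hp0 (hemb (u k) (hmem k))

/-- Palais–Smale sequences: norm identity and energy dichotomy. -/
theorem stmt11 (g : GraphData V) (μmin C lam p ηp c : ℝ) (hμmin : 0 < μmin)
    (hμ : ∀ x, μmin ≤ g.μ x) (hω : ∀ x, ∑' y, g.ω x y ≤ C) (hconn : g.G.Connected)
    (a : V → ℝ) (ha : ∀ x, 0 ≤ a x) (hlam : 1 < lam) (hp : 2 < p) (hηp : 0 < ηp)
    (hemb : ∀ v, g.memE a lam v →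
      (g.lpInt p v) ^ (1 / p) ≤ ηp * (g.enormSq a lam v) ^ ((1 : ℝ) / 2))
    (u : ℕ → V → ℝ) (hmem : ∀ k, g.memE a lam (u k))
    (hJ : Filter.Tendsto (fun k => g.Jlam a lam p (u k)) Filter.atTop (nhds c))
    (hJ' : ∃ ε : ℕ → ℝ, Filter.Tendsto ε Filter.atTop (nhds 0) ∧
      ∀ k, ∀ φ, g.memE a lam φ →
        |g.Jderiv a lam p (u k) φ| ≤ ε k * (g.enormSq a lam φ) ^ ((1 : ℝ) / 2)) :
    Filter.Tendsto (fun k => g.enormSq a lam (u k)) Filter.atTop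
        (nhds ((2 * p / (p - 2)) * c))
    ∧ (c = 0 ∨ ((p - 2) / (2 * p)) * (1 / (2 * ηp ^ p)) ^ (2 / (p - 2)) < c) :=
  stmt11_general g lam p ηp c a ha hlam hp hηp hemb u hmem hJ hJ'
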